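/- arXiv:1603.00854 — 2 statements merged into one kernel-verified Lean document; each statement's English description precedes it below -/
import Mathlib

section
/- Let Σ = {A_j : j ∈ J} be a finite set of real n×n matrices. If Σ is both LCP and RCP, then Σ is transversal, i.e., for every subset J' ⊆ J one has the direct sum decomposition N_{J'} ⊕ R_{J'} = ℝⁿ. -/
open Filter Topology Matrix

attribute [local instance] Matrix.normedAddCommGroup

/-- Left products `L_m = A_{j_m} ⋯ A_{j_1}` (with `L_0 = I`). -/
noncomputable def leftProd {n k : ℕ} (A : Fin k → Matrix (Fin n) (Fin n) ℝ)
    (j : ℕ → Fin k) : ℕ → Matrix (Fin n) (Fin n) ℝ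
  | 0 => 1
  | m + 1 => A (j m) * leftProd A j m

/-- Right products `R_m = A_{j_1} ⋯ A_{j_m}` (with `R_0 = I`). -/
noncomputable def rightProd {n k : ℕ} (A : Fin k → Matrix (Fin n) (Fin n) ℝ)
    (j : ℕ → Fin k) : ℕ → Matrix (Fin n) (Fin n) ℝ
  | 0 => 1
  | m + 1 => rightProd A j m * A (j m)

/-- Σ is LCP: for every sequence of indices the left products converge. -/
def IsLCP {n k : ℕ} (A : Fin k → Matrix (Fin n) (Fin n) ℝ) : Prop :=
  ∀ j : ℕ → Fin k, ∃ L : Matrix (Fin n) (Fin n) ℝ,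
    Tendsto (leftProd A j) atTop (𝓝 L)

/-- Σ is RCP: for every sequence of indices the right products converge. -/
def IsRCP {n k : ℕ} (A : Fin k → Matrix (Fin n) (Fin n) ℝ) : Prop :=
  ∀ j : ℕ → Fin k, ∃ R : Matrix (Fin n) (Fin n) ℝ,
    Tendsto (rightProd A j) atTop (𝓝 R)

/-- `N_{J'} = ∩_{j ∈ J'} ker (I - A_j)`. -/
noncomputable def Nspace {n k : ℕ} (A : Fin k → Matrix (Fin n) (Fin n) ℝ)
    (J' : Set (Fin k)) : Submodule ℝ (Fin n → ℝ) :=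
  ⨅ j ∈ J', LinearMap.ker (Matrix.mulVecLin (1 - A j))

/-- `R_{J'} = span of ∪_{j ∈ J'} range (I - A_j)`. -/
noncomputable def Rspace {n k : ℕ} (A : Fin k → Matrix (Fin n) (Fin n) ℝ)
    (J' : Set (Fin k)) : Submodule ℝ (Fin n → ℝ) :=
  ⨆ j ∈ J', LinearMap.range (Matrix.mulVecLin (1 - A j))

/-- Σ is 0-transversal: `N_{J'} ∩ R_{J'} = {0}` for every `J' ⊆ J`. -/
def IsZeroTransversal {n k : ℕ} (A : Fin k → Matrix (Fin n) (Fin n) ℝ) : Prop :=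
  ∀ J' : Set (Fin k), Nspace A J' ⊓ Rspace A J' = ⊥

/-- Σ is ℝⁿ-transversal: `N_{J'} + R_{J'} = ℝⁿ` for every `J' ⊆ J`. -/
def IsRnTransversal {n k : ℕ} (A : Fin k → Matrix (Fin n) (Fin n) ℝ) : Prop :=
  ∀ J' : Set (Fin k), Nspace A J' ⊔ Rspace A J' = ⊤

/-- Σ is transversal: `N_{J'} ⊕ R_{J'} = ℝⁿ` for every `J' ⊆ J`. -/
def IsTransversal {n k : ℕ} (A : Fin k → Matrix (Fin n) (Fin n) ℝ) : Prop :=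
  IsZeroTransversal A ∧ IsRnTransversal A

/-!
Choose a sequence of indices in `J'` that uses every index of `J'` infinitely often, and let
`L` be the limit of its left products. Since `L_{m+1} = A_{j_m} L_m`, passing to the limit along
the times where `j_m = j` gives `A_j L = L`, so `L x ∈ N_{J'}`; and `x - L_m x ∈ R_{J'}` for
all `m`, so `x - L x ∈ R_{J'}`. Hence LCP gives `N_{J'} + R_{J'} = ℝⁿ`.

Right products of `Σ` are transposed left products of `Σᵀ`, so RCP gives `N' + R' = ℝⁿ` for
the transposed family. For the dot product `N'` is orthogonal to `R_{J'}` and `R'` to `N_{J'}`,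
so a vector of `N_{J'} ∩ R_{J'}` is orthogonal to itself.
-/

section

variable {n k : ℕ} (A : Fin k → Matrix (Fin n) (Fin n) ℝ)

lemma mem_Nspace_iff {J' : Set (Fin k)} {x : Fin n → ℝ} :
    x ∈ Nspace A J' ↔ ∀ j ∈ J', A j *ᵥ x = x := by
  simp only [Nspace, Submodule.mem_iInf, LinearMap.mem_ker, mulVecLin_apply, sub_mulVec,
    one_mulVec, sub_eq_zero, eq_comm]

lemma range_le_Rspace {J' : Set (Fin k)} {j : Fin k} (hj : j ∈ J') :
    LinearMap.range (mulVecLin (1 - A j)) ≤ Rspace A J' :=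
  le_iSup₂ (f := fun j _ => LinearMap.range (mulVecLin (1 - A j))) j hj

lemma mul_eq_of_tendsto_leftProd {j : ℕ → Fin k} {L : Matrix (Fin n) (Fin n) ℝ}
    (hL : Tendsto (leftProd A j) atTop (𝓝 L)) {i : Fin k} (hi : ∃ᶠ m in atTop, j m = i) :
    A i * L = L := by
  obtain ⟨φ, hφ, hφi⟩ := extraction_of_frequently_atTop hi
  have hsucc : Tendsto (fun t => leftProd A j (φ t + 1)) atTop (𝓝 L) :=
    hL.comp ((tendsto_add_atTop_nat 1).comp hφ.tendsto_atTop)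
  have hmul : Tendsto (fun t => leftProd A j (φ t + 1)) atTop (𝓝 (A i * L)) := by
    simp only [leftProd, hφi]
    exact (hL.comp hφ.tendsto_atTop).const_mul (A i)
  exact tendsto_nhds_unique hmul hsucc

lemma sub_leftProd_mulVec_mem_Rspace {j : ℕ → Fin k} {J' : Set (Fin k)} (hj : ∀ m, j m ∈ J')
    (x : Fin n → ℝ) (m : ℕ) : x - leftProd A j m *ᵥ x ∈ Rspace A J' := by
  induction m with
  | zero => simp [leftProd]
  | succ m ih =>
    have hsplit : x - leftProd A j (m + 1) *ᵥ x
        = (1 - A (j m)) *ᵥ (leftProd A j m *ᵥ x) + (x - leftProd A j m *ᵥ x) := by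
      simp only [leftProd, sub_mulVec, one_mulVec, ← mulVec_mulVec]
      abel
    rw [hsplit]
    exact Submodule.add_mem _ (range_le_Rspace A (hj m) ⟨_, rfl⟩) ih

theorem IsLCP.isRnTransversal (hA : IsLCP A) : IsRnTransversal A := by
  intro J'
  rcases J'.eq_empty_or_nonempty with rfl | hne
  · simp [Nspace]
  obtain ⟨f, rfl⟩ := J'.toFinite.countable.exists_eq_range hne
  -- `f` enumerates `J'`; reading it through `Nat.unpair` repeats every value infinitely often.
  set j : ℕ → Fin k := fun m => f m.unpair.1
  have hj_freq : ∀ a, ∃ᶠ m in atTop, j m = f a := fun a =>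
    frequently_atTop.2 fun N => ⟨Nat.pair a N, Nat.right_le_pair a N, by simp [j]⟩
  obtain ⟨L, hL⟩ := hA j
  have hLx : ∀ x, Tendsto (fun m => leftProd A j m *ᵥ x) atTop (𝓝 (L *ᵥ x)) := fun x =>
    ((continuous_id.matrix_mulVec continuous_const).tendsto L).comp hL
  refine Submodule.eq_top_iff'.2 fun x =>
    Submodule.mem_sup.2 ⟨L *ᵥ x, ?_, x - L *ᵥ x, ?_, add_sub_cancel _ _⟩
  · rw [mem_Nspace_iff]
    rintro _ ⟨a, rfl⟩
    rw [mulVec_mulVec, mul_eq_of_tendsto_leftProd A hL (hj_freq a)]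
  · exact (Submodule.closed_of_finiteDimensional _).mem_of_tendsto
      (tendsto_const_nhds.sub (hLx x))
      (Eventually.of_forall (sub_leftProd_mulVec_mem_Rspace A (fun m => Set.mem_range_self _) x))

lemma leftProd_transpose (j : ℕ → Fin k) (m : ℕ) :
    leftProd (fun i => (A i)ᵀ) j m = (rightProd A j m)ᵀ := by
  induction m with
  | zero => simp [leftProd, rightProd]
  | succ m ih => rw [leftProd, rightProd, ih, transpose_mul]

theorem IsRCP.isLCP_transpose (hA : IsRCP A) : IsLCP (fun i => (A i)ᵀ) := by
  intro j
  obtain ⟨R, hR⟩ := hA j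
  refine ⟨Rᵀ, ?_⟩
  simp only [funext (leftProd_transpose A j)]
  exact (continuous_id.matrix_transpose.tendsto R).comp hR

lemma dotProduct_eq_zero_of_mem_Nspace_transpose {J' : Set (Fin k)} {u y : Fin n → ℝ}
    (hu : u ∈ Nspace (fun i => (A i)ᵀ) J') (hy : y ∈ Rspace A J') : u ⬝ᵥ y = 0 := by
  suffices Rspace A J' ≤ LinearMap.ker (dotProductBilin ℝ ℝ u) from this hy
  refine iSup₂_le fun i hi => ?_
  rintro _ ⟨z, rfl⟩
  have hui : u ᵥ* A i = u := by rw [← mulVec_transpose, (mem_Nspace_iff _).1 hu i hi]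
  simp [dotProduct_sub, dotProduct_mulVec, hui]

theorem IsZeroTransversal.of_isRnTransversal_transpose
    (hA : IsRnTransversal (fun i => (A i)ᵀ)) : IsZeroTransversal A := by
  intro J'
  refine eq_bot_iff.2 fun x ⟨hxN, hxR⟩ => ?_
  obtain ⟨u, hu, v, hv, rfl⟩ := Submodule.mem_sup.1 (Submodule.eq_top_iff'.1 (hA J') x)
  have hux : u ⬝ᵥ (u + v) = 0 := dotProduct_eq_zero_of_mem_Nspace_transpose A hu hxR
  have hvx : v ⬝ᵥ (u + v) = 0 := by
    rw [dotProduct_comm]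
    refine dotProduct_eq_zero_of_mem_Nspace_transpose (fun i => (A i)ᵀ) ?_ hv
    simp only [transpose_transpose]
    exact hxN
  have hself : (u + v) ⬝ᵥ (u + v) = 0 := by rw [add_dotProduct, hux, hvx, add_zero]
  exact (Submodule.mem_bot ℝ).2 (dotProduct_self_eq_zero.1 hself)

end

/-- If Σ is LCP and RCP then Σ is transversal. -/
theorem lcp_rcp_imp_transversal {n k : ℕ} (A : Fin k → Matrix (Fin n) (Fin n) ℝ)
    (hLCP : IsLCP A) (hRCP : IsRCP A) : IsTransversal A :=
  ⟨.of_isRnTransversal_transpose A hRCP.isLCP_transpose.isRnTransversal, hLCP.isRnTransversal⟩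
end

section
/- Let Σ = {A_j : j ∈ J} be a finite set of real n×n matrices such that Σ is LCP and ∩_{j∈J} ker(I − A_j) = {0}. If (j_i)_{i≥1} is a sequence in J in which every element of J occurs infinitely many times, then the right products A_{j_1} A_{j_2} ··· A_{j_m} converge to the zero matrix as m → ∞. -/
open Filter Topology Matrix

attribute [local instance] Matrix.normedAddCommGroup

/-!
If `Σ` is LCP, the semigroup it generates is bounded: otherwise some `x` has an unbounded orbit
`{P x | P a product of the A_j}`, and concatenating words that push it ever further while keeping its orbit unbounded
gives a single sequence whose left products diverge. If every `A_j` occurs infinitely often in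
`σ`, the limit `L` of the left products satisfies `A_j L = L` for all `j`, so `L = 0`. Hence the
powers of any limit `M` of products of words containing every letter tend to `0`: concatenate
words whose products approximate `M` fast enough, and compare `M ^ t` with their left product.
Finally, a cluster point `W` of the right products satisfies `W = W M` for such an `M`
(compare two times between which every letter occurs), so `W = W M ^ t → 0`.
-/

theorem exists_seq_concat {α : Type*} (u : ℕ → List α) (hu : ∀ t, u t ≠ []) :
    ∃ (σ : ℕ → α) (e : ℕ → ℕ), e 0 = 0 ∧
      ∀ t, (List.range (e (t + 1))).map σ = (List.range (e t)).map σ ++ u t := by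
  set p : ℕ → List α := fun t => ((List.range t).map u).flatten with hp
  have hp_succ : ∀ t, p (t + 1) = p t ++ u t := fun t => by simp [hp, List.range_succ]
  have hp_prefix : ∀ {s t}, s ≤ t → p s <+: p t := by
    intro s t hst
    induction t, hst using Nat.le_induction with
    | base => exact List.prefix_refl _
    | succ t _ ih => exact ih.trans (hp_succ t ▸ List.prefix_append _ _)
  have hp_length : ∀ t, t ≤ (p t).length := by
    intro t
    induction t with
    | zero => simp
    | succ t ih =>
      have := List.length_pos_iff.2 (hu t)
      rw [hp_succ, List.length_append]
      omega
  set σ : ℕ → α := fun i => (p (i + 1))[i]'(hp_length (i + 1))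
  have hσ : ∀ t, (List.range (p t).length).map σ = p t := by
    intro t
    refine List.ext_getElem (by simp) fun i hi _ => ?_
    simp only [List.getElem_map, List.getElem_range, σ]
    rcases le_total (i + 1) t with h | h
    · exact (hp_prefix h).getElem _
    · exact ((hp_prefix h).getElem _).symm
  exact ⟨σ, fun t => (p t).length, by simp [hp], fun t => by rw [hσ, hσ, hp_succ]⟩

lemma eventually_forall_exists_mem_Ico {ι : Type*} [Finite ι] {j : ℕ → ι}
    (hj : ∀ a, ∃ᶠ m in atTop, j m = a) (m : ℕ) :
    ∀ᶠ m' in atTop, ∀ a, ∃ i ∈ Set.Ico m m', j i = a := by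
  refine eventually_all.2 fun a => ?_
  obtain ⟨i, hi, hia⟩ := frequently_atTop.1 (hj a) m
  filter_upwards [eventually_gt_atTop i] with m' hm' using ⟨i, ⟨hi, hm'⟩, hia⟩

lemma exists_strictMono_forall_rel_succ {r : ℕ → ℕ → Prop} (h : ∀ n, ∀ᶠ k in atTop, r n k) :
    ∃ φ : ℕ → ℕ, StrictMono φ ∧ ∀ i, r (φ i) (φ (i + 1)) := by
  obtain ⟨ψ, -, hψ⟩ := extraction_forall_of_eventually fun n => (h n).and (eventually_gt_atTop n)
  refine ⟨fun i => ψ^[i] 0, strictMono_nat_of_lt_succ fun i => ?_, fun i => ?_⟩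
  · simpa only [Function.iterate_succ_apply'] using (hψ _).2
  · simpa only [Function.iterate_succ_apply'] using (hψ _).1

section Monoid

variable {M ι : Type*} [Monoid M]

def leftPartialProd (X : ℕ → M) (m : ℕ) : M := ((List.range m).map X).reverse.prod

def rightPartialProd (X : ℕ → M) (m : ℕ) : M := ((List.range m).map X).prod

@[simp]
lemma leftPartialProd_zero (X : ℕ → M) : leftPartialProd X 0 = 1 := rfl

lemma leftPartialProd_succ (X : ℕ → M) (m : ℕ) :
    leftPartialProd X (m + 1) = X m * leftPartialProd X m := by
  simp [leftPartialProd, List.range_succ]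

lemma rightPartialProd_add (X : ℕ → M) (m d : ℕ) :
    rightPartialProd X (m + d) =
      rightPartialProd X m * rightPartialProd (fun i => X (m + i)) d := by
  simp [rightPartialProd, List.range_add, Function.comp_def]

lemma leftPartialProd_mem {S : Submonoid M} {X : ℕ → M} (hX : ∀ t, X t ∈ S) (m : ℕ) :
    leftPartialProd X m ∈ S := by
  induction m with
  | zero => exact S.one_mem
  | succ m ih => rw [leftPartialProd_succ]; exact S.mul_mem (hX m) ih

lemma map_leftPartialProd {N F : Type*} [Monoid N] [FunLike F M N] [MonoidHomClass F M N] (f : F)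
    (X : ℕ → M) (m : ℕ) : f (leftPartialProd X m) = leftPartialProd (f ∘ X) m := by
  simp [leftPartialProd, map_list_prod, List.map_reverse]

lemma map_rightPartialProd {N F : Type*} [Monoid N] [FunLike F M N] [MonoidHomClass F M N] (f : F)
    (X : ℕ → M) (m : ℕ) : f (rightPartialProd X m) = rightPartialProd (f ∘ X) m := by
  simp [rightPartialProd, map_list_prod]

lemma mem_closure_range_iff_exists_list {A : ι → M} {x : M} :
    x ∈ Submonoid.closure (Set.range A) ↔ ∃ w : List ι, (w.map A).prod = x := by
  rw [← FreeMonoid.mrange_lift, MonoidHom.mem_mrange]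
  exact ⟨fun ⟨l, hl⟩ => ⟨l.toList, by rwa [FreeMonoid.lift_apply] at hl⟩,
    fun ⟨w, hw⟩ => ⟨FreeMonoid.ofList w, by rwa [FreeMonoid.lift_ofList]⟩⟩

lemma rightPartialProd_mem_closure (A : ι → M) (j : ℕ → ι) (m : ℕ) :
    rightPartialProd (A ∘ j) m ∈ Submonoid.closure (Set.range A) :=
  mem_closure_range_iff_exists_list.2 ⟨(List.range m).map j, by simp [rightPartialProd]⟩

def fullProducts (A : ι → M) : Set M := {x | ∃ w : List ι, (∀ a, a ∈ w) ∧ (w.map A).prod = x}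

lemma fullProducts_subset_closure (A : ι → M) :
    fullProducts A ⊆ Submonoid.closure (Set.range A) :=
  fun _ ⟨w, _, hw⟩ => mem_closure_range_iff_exists_list.2 ⟨w, hw⟩

lemma exists_mem_fullProducts_rightPartialProd_eq_mul (A : ι → M) {j : ℕ → ι} {m m' : ℕ}
    (hm : m ≤ m') (hwin : ∀ a, ∃ i ∈ Set.Ico m m', j i = a) :
    ∃ G ∈ fullProducts A, rightPartialProd (A ∘ j) m' = rightPartialProd (A ∘ j) m * G := by
  obtain ⟨d, rfl⟩ := Nat.exists_eq_add_of_le hm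
  refine ⟨rightPartialProd (fun i => A (j (m + i))) d,
    ⟨(List.range d).map fun i => j (m + i), fun a => ?_, ?_⟩, rightPartialProd_add _ _ _⟩
  · obtain ⟨i, ⟨hi, hi'⟩, rfl⟩ := hwin a
    exact List.mem_map.2 ⟨i - m, List.mem_range.2 (by omega), by congr 1; omega⟩
  · simp [rightPartialProd, Function.comp_def]

theorem exists_seq_leftPartialProd_eq (A : ι → M) (w : ℕ → List ι) (hw : ∀ t, w t ≠ []) :
    ∃ (σ : ℕ → ι) (e : ℕ → ℕ), StrictMono e ∧
      (∀ t, leftPartialProd (A ∘ σ) (e t) = leftPartialProd (fun s => ((w s).map A).prod) t) ∧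
      ∀ t, ∀ a ∈ w t, ∃ m ≥ t, σ m = a := by
  obtain ⟨σ, e, he0, he⟩ := exists_seq_concat (fun t => (w t).reverse) (by simpa using hw)
  have he_succ : ∀ t, e (t + 1) = e t + (w t).length := fun t => by
    simpa using congrArg List.length (he t)
  have he_mono : StrictMono e := strictMono_nat_of_lt_succ fun t => by
    have := List.length_pos_iff.2 (hw t)
    have := he_succ t
    omega
  refine ⟨σ, e, he_mono, fun t => ?_, fun t a ha => ?_⟩
  · induction t with
    | zero => simp [he0]
    | succ t ih =>
      rw [leftPartialProd_succ, ← ih, leftPartialProd, leftPartialProd, ← List.map_map, he]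
      simp [List.prod_append]
  · obtain ⟨i, hi, hia⟩ := List.getElem_of_mem (List.mem_reverse.2 ha)
    have hlen : e t + i < ((List.range (e (t + 1))).map σ).length := by
      simp only [List.length_reverse] at hi
      simp [he_succ]
      omega
    have hσ := List.getElem_of_eq (he t) hlen
    rw [List.getElem_append_right (by simp)] at hσ
    refine ⟨e t + i, (he_mono.id_le t).trans (Nat.le_add_right _ _), ?_⟩
    simpa [hia] using hσ

end Monoid

section LeftConvergent

variable {R ι : Type*} [Monoid R] [TopologicalSpace R]

def IsLeftConvergent (A : ι → R) : Prop :=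
  ∀ σ : ℕ → ι, ∃ L, Tendsto (leftPartialProd (A ∘ σ)) atTop (𝓝 L)

variable [ContinuousMul R] [T2Space R] {A : ι → R}

theorem mul_eq_of_tendsto_leftPartialProd {σ : ℕ → ι} {L : R}
    (hL : Tendsto (leftPartialProd (A ∘ σ)) atTop (𝓝 L)) {a : ι}
    (ha : ∃ᶠ m in atTop, σ m = a) : A a * L = L := by
  obtain ⟨φ, hφ, hσφ⟩ := extraction_of_frequently_atTop ha
  have hsucc : Tendsto (fun i => leftPartialProd (A ∘ σ) (φ i + 1)) atTop (𝓝 L) :=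
    hL.comp ((tendsto_add_atTop_nat 1).comp hφ.tendsto_atTop)
  refine tendsto_nhds_unique ?_ hsucc
  simpa [leftPartialProd_succ, hσφ] using (hL.comp hφ.tendsto_atTop).const_mul (A a)

end LeftConvergent

theorem IsLeftConvergent.tendsto_leftPartialProd_zero {R ι : Type*} [MonoidWithZero R]
    [TopologicalSpace R] [ContinuousMul R] [T2Space R] [Nonempty ι] {A : ι → R}
    (hA : IsLeftConvergent A) (hfix : ∀ x, (∀ a, A a * x = x) → x = 0) {X : ℕ → R}
    (hX : ∀ t, X t ∈ fullProducts A) : Tendsto (leftPartialProd X) atTop (𝓝 0) := by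
  choose w hw_full hw using hX
  obtain ⟨σ, e, he, hprod, hσ⟩ := exists_seq_leftPartialProd_eq A w
    fun t => List.ne_nil_of_mem (hw_full t (Classical.arbitrary ι))
  obtain ⟨L, hL⟩ := hA σ
  have hL0 : L = 0 := hfix L fun a =>
    mul_eq_of_tendsto_leftPartialProd hL (frequently_atTop.2 fun t => hσ t a (hw_full t a))
  simp only [hw] at hprod
  rw [show leftPartialProd X = _ from funext fun t => (hprod t).symm, ← hL0]
  exact hL.comp he.tendsto_atTop

section Boundedness

variable {𝕜 R ι : Type*} [NontriviallyNormedField 𝕜] [NormedRing R] [NormedAlgebra 𝕜 R]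

variable (𝕜) in
def boundedOrbits (A : ι → R) : Submodule 𝕜 R where
  carrier := {x | ∃ C, ∀ y ∈ Submonoid.closure (Set.range A), ‖y * x‖ ≤ C}
  add_mem' := by
    rintro x x' ⟨C, hC⟩ ⟨C', hC'⟩
    refine ⟨C + C', fun y hy => ?_⟩
    rw [mul_add]
    exact (norm_add_le _ _).trans (add_le_add (hC y hy) (hC' y hy))
  zero_mem' := ⟨0, fun y _ => by simp⟩
  smul_mem' := by
    rintro c x ⟨C, hC⟩
    refine ⟨‖c‖ * C, fun y hy => ?_⟩
    rw [mul_smul_comm, norm_smul]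
    exact mul_le_mul_of_nonneg_left (hC y hy) (norm_nonneg c)

variable [CompleteSpace 𝕜] [FiniteDimensional 𝕜 R]

variable (𝕜) in
theorem exists_uniform_bound_boundedOrbits (A : ι → R) :
    ∃ C, 0 ≤ C ∧ ∀ x ∈ boundedOrbits 𝕜 A, ∀ y ∈ Submonoid.closure (Set.range A),
      ‖y * x‖ ≤ C * ‖x‖ := by
  set V := boundedOrbits 𝕜 A
  have : CompleteSpace V := FiniteDimensional.complete 𝕜 V
  let g : Submonoid.closure (Set.range A) → V →L[𝕜] R :=
    fun y => (ContinuousLinearMap.mul 𝕜 R y).comp V.subtypeL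
  obtain ⟨C, hC⟩ := banach_steinhaus (g := g) fun x => x.2.imp fun C hC y => hC y y.2
  refine ⟨max C 0, le_max_right _ _, fun x hx y hy => ?_⟩
  calc ‖y * x‖ = ‖g ⟨y, hy⟩ ⟨x, hx⟩‖ := rfl
    _ ≤ ‖g ⟨y, hy⟩‖ * ‖x‖ := (g ⟨y, hy⟩).le_opNorm _
    _ ≤ max C 0 * ‖x‖ := by gcongr; exact (hC _).trans (le_max_left _ _)

theorem exists_le_norm_mul_notMem_boundedOrbits [Finite ι] (A : ι → R) {x : R}
    (hx : x ∉ boundedOrbits 𝕜 A) (B : ℝ) :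
    ∃ y ∈ Submonoid.closure (Set.range A), B ≤ ‖y * x‖ ∧ y * x ∉ boundedOrbits 𝕜 A := by
  obtain ⟨CV, hCV0, hCV⟩ := exists_uniform_bound_boundedOrbits 𝕜 A
  obtain ⟨nA, hnA⟩ := Finite.exists_le fun a => ‖A a‖
  by_contra! h
  have hxB : ‖x‖ < B := by
    by_contra! hB
    exact hx (by simpa using h 1 (one_mem _) (by simpa using hB))
  -- Along the orbit of `x`, either the norm stays below `B`, or the orbit has entered
  -- `boundedOrbits 𝕜 A` at a point of norm at most `nA * B` and is bounded from then on.
  have key : ∀ y ∈ Submonoid.closure (Set.range A),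
      ‖y * x‖ < B ∨ ∀ z ∈ Submonoid.closure (Set.range A), ‖z * (y * x)‖ ≤ CV * (nA * B) := by
    intro y hy
    induction hy using Submonoid.closure_induction_left with
    | one => exact .inl (by simpa using hxB)
    | mul_left _ ha y hy ih =>
      obtain ⟨a, rfl⟩ := ha
      rw [mul_assoc]
      rcases ih with hlt | hbdd
      · refine (lt_or_ge _ B).imp_right fun hB z hz => ?_
        have hmem := h _ (mul_mem (Submonoid.subset_closure ⟨a, rfl⟩) hy) (by rwa [mul_assoc])
        rw [mul_assoc] at hmem
        have hnA0 : 0 ≤ nA := (norm_nonneg _).trans (hnA a)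
        calc ‖z * (A a * (y * x))‖ ≤ CV * ‖A a * (y * x)‖ := hCV _ hmem z hz
          _ ≤ CV * (‖A a‖ * ‖y * x‖) := by gcongr; exact norm_mul_le _ _
          _ ≤ CV * (nA * B) := by gcongr; exact hnA a
      · exact .inr fun z hz => by
          rw [← mul_assoc]
          exact hbdd _ (mul_mem hz (Submonoid.subset_closure ⟨a, rfl⟩))
  refine hx ⟨max B (CV * (nA * B)), fun y hy => ?_⟩
  rcases key y hy with hlt | hbdd
  · exact hlt.le.trans (le_max_left _ _)
  · simpa using (hbdd 1 (one_mem _)).trans (le_max_right _ _)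

theorem exists_seq_tendsto_norm_leftPartialProd_mul [Finite ι] (A : ι → R) {x : R}
    (hx : x ∉ boundedOrbits 𝕜 A) :
    ∃ (σ : ℕ → ι) (e : ℕ → ℕ), StrictMono e ∧
      Tendsto (fun t => ‖leftPartialProd (A ∘ σ) (e t) * x‖) atTop atTop := by
  have step : ∀ v : R, ∃ w : List ι, v ∉ boundedOrbits 𝕜 A →
      ‖v‖ + 1 ≤ ‖(w.map A).prod * v‖ ∧ (w.map A).prod * v ∉ boundedOrbits 𝕜 A := by
    intro v
    by_cases hv : v ∈ boundedOrbits 𝕜 A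
    · exact ⟨[], fun h => absurd hv h⟩
    · obtain ⟨y, hy, hyB, hyV⟩ := exists_le_norm_mul_notMem_boundedOrbits A hv (‖v‖ + 1)
      obtain ⟨w, rfl⟩ := mem_closure_range_iff_exists_list.1 hy
      exact ⟨w, fun _ => ⟨hyB, hyV⟩⟩
  choose w hw using step
  let v : ℕ → R := fun t => Nat.rec x (fun _ v => ((w v).map A).prod * v) t
  have hv : ∀ t, v t ∉ boundedOrbits 𝕜 A ∧ (t : ℝ) ≤ ‖v t‖ := by
    intro t
    induction t with
    | zero => exact ⟨hx, by simp⟩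
    | succ t ih =>
      obtain ⟨hgrow, hmem⟩ := hw _ ih.1
      exact ⟨hmem, by push_cast; linarith [ih.2]⟩
  have hne : ∀ t, w (v t) ≠ [] := by
    intro t hnil
    have := (hw _ (hv t).1).1
    rw [hnil] at this
    norm_num at this
  obtain ⟨σ, e, he, hprod, -⟩ := exists_seq_leftPartialProd_eq A (fun t => w (v t)) hne
  have hve : ∀ t, leftPartialProd (A ∘ σ) (e t) * x = v t := by
    intro t
    rw [hprod]
    induction t with
    | zero => exact one_mul x
    | succ t ih => rw [leftPartialProd_succ, mul_assoc, ih]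
  refine ⟨σ, e, he, ?_⟩
  simp only [hve]
  exact tendsto_atTop_mono (fun t => (hv t).2) tendsto_natCast_atTop_atTop

end Boundedness

theorem IsLeftConvergent.exists_norm_le {R ι : Type*} [NormedRing R] (𝕜 : Type*)
    [NontriviallyNormedField 𝕜] [CompleteSpace 𝕜] [NormedAlgebra 𝕜 R] [FiniteDimensional 𝕜 R]
    [Finite ι] {A : ι → R} (hA : IsLeftConvergent A) :
    ∃ C, ∀ y ∈ Submonoid.closure (Set.range A), ‖y‖ ≤ C := by
  suffices h1 : (1 : R) ∈ boundedOrbits 𝕜 A by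
    obtain ⟨C, hC⟩ := h1
    exact ⟨C, fun y hy => by simpa using hC y hy⟩
  by_contra h1
  obtain ⟨σ, e, he, hdiv⟩ := exists_seq_tendsto_norm_leftPartialProd_mul A h1
  obtain ⟨L, hL⟩ := hA σ
  simp only [mul_one] at hdiv
  exact not_tendsto_atTop_of_tendsto_nhds (hL.comp he.tendsto_atTop).norm hdiv

section NormedRing

variable {R : Type*} [NormedRing R]

theorem norm_leftPartialProd_sub_pow_le (X : ℕ → R) (M : R) {C : ℝ} (hM : ∀ s, ‖M ^ s‖ ≤ C)
    (hX : ∀ t, ‖leftPartialProd X t‖ ≤ C) (t : ℕ) :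
    ‖leftPartialProd X t - M ^ t‖ ≤ C * C * ∑ r ∈ Finset.range t, ‖X r - M‖ := by
  have hC : 0 ≤ C := (norm_nonneg _).trans (hM 0)
  suffices h : ∀ s, ‖M ^ s * (leftPartialProd X t - M ^ t)‖ ≤
      C * C * ∑ r ∈ Finset.range t, ‖X r - M‖ by simpa using h 0
  induction t with
  | zero => simp
  | succ t ih =>
    intro s
    have htel : M ^ s * (leftPartialProd X (t + 1) - M ^ (t + 1)) =
        M ^ s * (X t - M) * leftPartialProd X t + M ^ (s + 1) * (leftPartialProd X t - M ^ t) := by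
      rw [leftPartialProd_succ, pow_succ' M t, pow_succ M s]
      noncomm_ring
    calc ‖M ^ s * (leftPartialProd X (t + 1) - M ^ (t + 1))‖
        ≤ ‖M ^ s‖ * ‖X t - M‖ * ‖leftPartialProd X t‖ +
            C * C * ∑ r ∈ Finset.range t, ‖X r - M‖ := by
          rw [htel]
          exact (norm_add_le _ _).trans (add_le_add norm_mul₃_le (ih (s + 1)))
      _ ≤ C * ‖X t - M‖ * C + C * C * ∑ r ∈ Finset.range t, ‖X r - M‖ := by
          gcongr
          exacts [hM s, hX t]
      _ = C * C * ∑ r ∈ Finset.range (t + 1), ‖X r - M‖ := by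
          rw [Finset.sum_range_succ]
          ring

theorem exists_leftPartialProd_near_pow {S : Submonoid R} {C : ℝ} (hS : ∀ y ∈ S, ‖y‖ ≤ C)
    {s : Set R} (hs : s ⊆ S) {M : R} (hM : M ∈ closure s) {η : ℝ} (hη : 0 < η) :
    ∃ X : ℕ → R, (∀ t, X t ∈ s) ∧ ∀ t, ‖leftPartialProd X t - M ^ t‖ ≤ η := by
  have hC : 0 ≤ C := (norm_nonneg _).trans (hS 1 S.one_mem)
  have hpow : ∀ t, ‖M ^ t‖ ≤ C := by
    have hMS : M ∈ S.topologicalClosure := closure_mono hs hM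
    have hclS : closure (S : Set R) ⊆ Metric.closedBall 0 C :=
      closure_minimal (fun y hy => mem_closedBall_zero_iff.2 (hS y hy)) Metric.isClosed_closedBall
    exact fun t => mem_closedBall_zero_iff.1 (hclS (S.topologicalClosure.pow_mem hMS t))
  set δ := η / (2 * (C * C + 1)) with hδ
  have hδ0 : 0 < δ := by positivity
  have happrox : ∀ r : ℕ, ∃ x ∈ s, ‖x - M‖ < δ * (1 / 2) ^ r := fun r => by
    obtain ⟨x, hx, hxM⟩ := Metric.mem_closure_iff.1 hM (δ * (1 / 2) ^ r) (by positivity)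
    exact ⟨x, hx, by rwa [dist_comm, dist_eq_norm] at hxM⟩
  choose X hXs hXM using happrox
  refine ⟨X, hXs, fun t => ?_⟩
  have hsum : ∑ r ∈ Finset.range t, ‖X r - M‖ ≤ 2 * δ := by
    calc ∑ r ∈ Finset.range t, ‖X r - M‖ ≤ ∑ r ∈ Finset.range t, δ * (1 / 2) ^ r :=
          Finset.sum_le_sum fun r _ => (hXM r).le
      _ = δ * ∑ r ∈ Finset.range t, (1 / 2 : ℝ) ^ r := by rw [Finset.mul_sum]
      _ ≤ δ * 2 := by gcongr; exact sum_geometric_two_le t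
      _ = 2 * δ := mul_comm _ _
  calc ‖leftPartialProd X t - M ^ t‖ ≤ C * C * ∑ r ∈ Finset.range t, ‖X r - M‖ :=
        norm_leftPartialProd_sub_pow_le X M hpow
          (fun t => hS _ (leftPartialProd_mem (fun r => hs (hXs r)) t)) t
    _ ≤ C * C * (2 * δ) := by gcongr
    _ ≤ η := by
        rw [hδ, mul_div_assoc', mul_div_assoc', div_le_iff₀ (by positivity)]
        nlinarith [mul_nonneg hC hC]

theorem tendsto_pow_zero_of_mem_closure {S : Submonoid R} {C : ℝ} (hS : ∀ y ∈ S, ‖y‖ ≤ C)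
    {s : Set R} (hs : s ⊆ S)
    (hs_zero : ∀ X : ℕ → R, (∀ t, X t ∈ s) → Tendsto (leftPartialProd X) atTop (𝓝 0))
    {M : R} (hM : M ∈ closure s) : Tendsto (M ^ ·) atTop (𝓝 0) := by
  refine Metric.tendsto_atTop.2 fun ε hε => ?_
  obtain ⟨X, hXs, hXM⟩ := exists_leftPartialProd_near_pow hS hs hM (half_pos hε)
  obtain ⟨N, hN⟩ := Metric.tendsto_atTop.1 (hs_zero X hXs) _ (half_pos hε)
  refine ⟨N, fun t ht => ?_⟩
  specialize hN t ht
  rw [dist_zero_right] at hN ⊢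
  calc ‖M ^ t‖ ≤ ‖leftPartialProd X t‖ + ‖leftPartialProd X t - M ^ t‖ := by
        rw [norm_sub_rev]; exact norm_le_norm_add_norm_sub' _ _
    _ < ε / 2 + ε / 2 := add_lt_add_of_lt_of_le hN (hXM t)
    _ = ε := add_halves ε

end NormedRing

theorem exists_mem_closure_eq_mul {R : Type*} [MetricSpace R] [ProperSpace R] [Monoid R]
    [ContinuousMul R] {s : Set R} (hs : Bornology.IsBounded s) {x G : ℕ → R}
    (hG : ∀ k, G k ∈ s) (hx : ∀ k, x (k + 1) = x k * G k) {W : R}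
    (hW : Tendsto x atTop (𝓝 W)) : ∃ M ∈ closure s, W = W * M := by
  obtain ⟨M, hM, ψ, hψ, hGM⟩ := tendsto_subseq_of_bounded hs hG
  refine ⟨M, hM, tendsto_nhds_unique (hW.comp ((tendsto_add_atTop_nat 1).comp hψ.tendsto_atTop)) ?_⟩
  simpa [Function.comp_def, hx] using (hW.comp hψ.tendsto_atTop).mul hGM

theorem tendsto_rightPartialProd_zero {R ι : Type*} [NormedRing R] [ProperSpace R] [Finite ι]
    (A : ι → R) {C : ℝ} (hC : ∀ y ∈ Submonoid.closure (Set.range A), ‖y‖ ≤ C)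
    (hfull : ∀ X : ℕ → R, (∀ t, X t ∈ fullProducts A) → Tendsto (leftPartialProd X) atTop (𝓝 0))
    {j : ℕ → ι} (hj : ∀ a, ∃ᶠ m in atTop, j m = a) :
    Tendsto (rightPartialProd (A ∘ j)) atTop (𝓝 0) := by
  have hS : Bornology.IsBounded (Submonoid.closure (Set.range A) : Set R) :=
    (Metric.isBounded_closedBall (x := 0) (r := C)).subset
      fun y hy => mem_closedBall_zero_iff.2 (hC y hy)
  refine tendsto_of_subseq_tendsto fun ns hns => ?_
  obtain ⟨W, -, ψ, hψ, hW⟩ :=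
    tendsto_subseq_of_bounded hS fun k => rightPartialProd_mem_closure A j (ns k)
  refine ⟨ψ, ?_⟩
  suffices hW0 : W = 0 by rwa [hW0] at hW
  set u := ns ∘ ψ
  have hu : Tendsto u atTop atTop := hns.comp hψ.tendsto_atTop
  obtain ⟨φ, hφ, hφu⟩ := exists_strictMono_forall_rel_succ
    (r := fun p q => u p ≤ u q ∧ ∀ a, ∃ i ∈ Set.Ico (u p) (u q), j i = a) fun p =>
      (hu.eventually (eventually_ge_atTop (u p))).and
        (hu.eventually (eventually_forall_exists_mem_Ico hj (u p)))
  choose G hG hGeq using fun i =>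
    exists_mem_fullProducts_rightPartialProd_eq_mul A (hφu i).1 (hφu i).2
  obtain ⟨M, hM, hWM⟩ := exists_mem_closure_eq_mul (hS.subset (fullProducts_subset_closure A)) hG
    (x := fun i => rightPartialProd (A ∘ j) (u (φ i))) hGeq (hW.comp hφ.tendsto_atTop)
  have hMpow := tendsto_pow_zero_of_mem_closure hC (fullProducts_subset_closure A) hfull hM
  have hWpow : ∀ t, W * M ^ t = W := fun t => by
    induction t with
    | zero => simp
    | succ t ih => rw [pow_succ, ← mul_assoc, ih, ← hWM]
  have := hMpow.const_mul W
  simp only [hWpow, mul_zero] at this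
  exact tendsto_const_nhds_iff.1 this

lemma Matrix.eq_zero_of_forall_mul_eq {ι m p K : Type*} [Fintype m] [DecidableEq m] [Fintype p]
    [DecidableEq p] [CommRing K] {A : ι → Matrix m m K}
    (hker : (⨅ a, LinearMap.ker (Matrix.mulVecLin (1 - A a))) = ⊥) {X : Matrix m p K}
    (hX : ∀ a, A a * X = X) : X = 0 := by
  refine Matrix.ext_of_mulVec_single fun i => ?_
  have hmem : X *ᵥ Pi.single i 1 ∈ ⨅ a, LinearMap.ker (Matrix.mulVecLin (1 - A a)) := by
    refine Submodule.mem_iInf _ |>.2 fun a => ?_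
    rw [LinearMap.mem_ker, Matrix.mulVecLin_apply, Matrix.sub_mulVec, Matrix.one_mulVec,
      Matrix.mulVec_mulVec, hX, sub_self]
  rw [hker, Submodule.mem_bot] at hmem
  rw [hmem, Matrix.zero_mulVec]

lemma leftProd_eq_leftPartialProd {n k : ℕ} (A : Fin k → Matrix (Fin n) (Fin n) ℝ)
    (j : ℕ → Fin k) (m : ℕ) : leftProd A j m = leftPartialProd (A ∘ j) m := by
  induction m with
  | zero => rfl
  | succ m ih => rw [leftProd, ih, leftPartialProd_succ]; rfl

lemma rightProd_eq_rightPartialProd {n k : ℕ} (A : Fin k → Matrix (Fin n) (Fin n) ℝ)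
    (j : ℕ → Fin k) (m : ℕ) : rightProd A j m = rightPartialProd (A ∘ j) m := by
  induction m with
  | zero => rfl
  | succ m ih => simp [rightProd, ih, rightPartialProd, List.range_succ]

lemma Matrix.continuous_toEuclideanCLM {m 𝕜 : Type*} [Fintype m] [DecidableEq m] [RCLike 𝕜] :
    Continuous (Matrix.toEuclideanCLM (n := m) (𝕜 := 𝕜)) :=
  LinearMap.continuous_of_finiteDimensional
    (Matrix.toEuclideanCLM (n := m) (𝕜 := 𝕜)).toAlgEquiv.toLinearMap

lemma Matrix.continuous_toEuclideanCLM_symm {m 𝕜 : Type*} [Fintype m] [DecidableEq m]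
    [RCLike 𝕜] : Continuous (Matrix.toEuclideanCLM (n := m) (𝕜 := 𝕜)).symm :=
  LinearMap.continuous_of_finiteDimensional
    (Matrix.toEuclideanCLM (n := m) (𝕜 := 𝕜)).symm.toAlgEquiv.toLinearMap

lemma IsLCP.isLeftConvergent_toEuclideanCLM {n k : ℕ} {A : Fin k → Matrix (Fin n) (Fin n) ℝ}
    (hA : IsLCP A) : IsLeftConvergent (Matrix.toEuclideanCLM (n := Fin n) (𝕜 := ℝ) ∘ A) :=
  fun σ => by
    obtain ⟨L, hL⟩ := hA σ
    refine ⟨_, ((Matrix.continuous_toEuclideanCLM.tendsto L).comp hL).congr fun m => ?_⟩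
    simp [leftProd_eq_leftPartialProd, map_leftPartialProd, Function.comp_assoc]

/-- if Σ is LCP, `∩_j ker (I - A_j) = {0}`, and each index of `J`
occurs infinitely often in the sequence `(j_i)`, then the right products
`A_{j_1} ⋯ A_{j_m}` tend to the zero matrix. -/
theorem rightProd_tendsto_zero {n k : ℕ}
    (A : Fin k → Matrix (Fin n) (Fin n) ℝ) (hLCP : IsLCP A)
    (hker : (⨅ j : Fin k, LinearMap.ker (Matrix.mulVecLin (1 - A j))) = ⊥)
    (j : ℕ → Fin k) (hinf : ∀ a : Fin k, ∀ N : ℕ, ∃ m, N ≤ m ∧ j m = a) :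
    Tendsto (rightProd A j) atTop (𝓝 (0 : Matrix (Fin n) (Fin n) ℝ)) := by
  have : Nonempty (Fin k) := ⟨j 0⟩
  -- The entrywise norm is not submultiplicative, so pass to operators on Euclidean space.
  set φ := Matrix.toEuclideanCLM (n := Fin n) (𝕜 := ℝ)
  have hconv : IsLeftConvergent (φ ∘ A) := hLCP.isLeftConvergent_toEuclideanCLM
  have hfix : ∀ x, (∀ a, (φ ∘ A) a * x = x) → x = 0 := fun x hx => by
    have := Matrix.eq_zero_of_forall_mul_eq hker (X := φ.symm x) fun a => by
      simpa only [Function.comp_apply, map_mul, StarAlgEquiv.symm_apply_apply]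
        using congrArg φ.symm (hx a)
    simpa using congrArg φ this
  obtain ⟨C, hC⟩ := hconv.exists_norm_le ℝ
  have hR := tendsto_rightPartialProd_zero (φ ∘ A) hC
    (fun X hX => hconv.tendsto_leftPartialProd_zero hfix hX) fun a => frequently_atTop.2 (hinf a)
  refine (((Matrix.continuous_toEuclideanCLM_symm.tendsto 0).comp hR).congr fun m => ?_).trans
    (by simp)
  simp [φ, rightProd_eq_rightPartialProd, ← map_rightPartialProd, Function.comp_assoc]
end
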